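/- Let n ≥ 1 and set d := δ_1 + δ_2 + ⋯ + δ_{n−1}. Then: (i) d^ℓ(P_n) = 0 for every ℓ > ⌊n/2⌋; and (ii) if R is a commutative ℚ-algebra, then Σ_{ℓ=0}^{⌊n/2⌋} (1/ℓ!) d^ℓ(P_n) = Σ_{S} δ_S(P_n), where the sum on the right runs over all sparse subsets S of {1,…,n−1} and δ_S denotes the composition of the operators δ_i over i ∈ S taken in increasing order of i. (This is the identity exp(Σ_{i=1}^{n−1} b_{i+1,i} ∂_{a_{i+1}} ∂_{a_i})(a_n ⋯ a_1) = Σ_{ℓ=0}^{⌊n/2⌋} Σ_{1 ≤ i₁ ≪ ⋯ ≪ i_ℓ ≤ n−1} δ_{i₁} ⋯ δ_{i_ℓ}(a_n ⋯ a_1).) -/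

import Mathlib

open MvPolynomial

/-- The monomial `P_n = a_n a_{n-1} ⋯ a_1` in the polynomial ring over `R` in the two
families of indeterminates `a_i = X (Sum.inl i)` and `b_i = X (Sum.inr i)`
(`b_i` plays the role of the symbol `b_{i+1,i}`); `P_0 = 1`. -/
noncomputable def Pmono (R : Type*) [CommRing R] (n : ℕ) : MvPolynomial (ℕ ⊕ ℕ) R :=
  ∏ j ∈ Finset.Icc 1 n, X (Sum.inl j)

/-- The operator `δ_i p = b_i • ∂_{a_{i+1}} ∂_{a_i} p`: multiplication by the variable
`b_i = X (Sum.inr i)` composed with the formal partial derivatives with respect to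
`a_{i+1}` and `a_i`. -/
noncomputable def deltaOp {R : Type*} [CommRing R] (i : ℕ)
    (p : MvPolynomial (ℕ ⊕ ℕ) R) : MvPolynomial (ℕ ⊕ ℕ) R :=
  X (Sum.inr i) * pderiv (Sum.inl (i + 1)) (pderiv (Sum.inl i) p)

/-- The operator `d = δ_1 + δ_2 + ⋯ + δ_{n-1}`. -/
noncomputable def dOp (R : Type*) [CommRing R] (n : ℕ)
    (p : MvPolynomial (ℕ ⊕ ℕ) R) : MvPolynomial (ℕ ⊕ ℕ) R :=
  ∑ i ∈ Finset.Icc 1 (n - 1), deltaOp i p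

/-- The collection of sparse subsets of `{1, …, n-1}`: subsets `S ⊆ {1, …, n-1}` such that
`i ∈ S` implies `i + 1 ∉ S`. -/
def sparseSets (n : ℕ) : Finset (Finset ℕ) :=
  (Finset.Icc 1 (n - 1)).powerset.filter fun S => ∀ i ∈ S, i + 1 ∉ S

/-! For sparse `S`, `δ_S P_n` is the squarefree monomial obtained from `P_n` by trading each
pair `a_{i+1} a_i`, `i ∈ S`, for `b_i`. Applying `d` to it gives the sum of the monomials of
`S ∪ {i}` over those `i` for which `a_i` and `a_{i+1}` both survive, i.e. for which `S ∪ {i}`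
is again sparse. Every sparse set of size `ℓ + 1` arises from exactly `ℓ + 1` such pairs
`(S, i)`, so `d^ℓ P_n = ℓ! ∑_{|S| = ℓ} δ_S P_n`. Since a sparse `S` satisfies `2 |S| ≤ n`,
both claims follow. -/

open Finset

theorem MvPolynomial.pderiv_prod_X {σ R : Type*} [CommSemiring R] [DecidableEq σ]
    (A : Finset σ) (v : σ) :
    pderiv v (∏ w ∈ A, X w : MvPolynomial σ R) = if v ∈ A then ∏ w ∈ A.erase v, X w else 0 := by
  induction A using Finset.induction_on with
  | empty => simp
  | insert w A hw ih =>
    rw [prod_insert hw, Derivation.leibniz, ih, pderiv_X]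
    by_cases hvw : v = w
    · subst hvw
      simp [hw]
    · rw [erase_insert_of_ne (Ne.symm hvw), prod_insert fun h => hw (mem_of_mem_erase h)]
      by_cases hvA : v ∈ A <;> simp [hvw, hvA]

def uncovered (n : ℕ) (S : Finset ℕ) : Finset ℕ :=
  Icc 1 n \ (S ∪ S.image (· + 1))

def addable (n : ℕ) (S : Finset ℕ) : Finset ℕ :=
  (Icc 1 (n - 1)).filter fun i => i ∈ uncovered n S ∧ i + 1 ∈ uncovered n S

theorem mem_uncovered {n j : ℕ} {S : Finset ℕ} :
    j ∈ uncovered n S ↔ 1 ≤ j ∧ j ≤ n ∧ j ∉ S ∧ ∀ k ∈ S, k + 1 ≠ j := by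
  simp [uncovered, and_assoc]

theorem mem_addable {n i : ℕ} {S : Finset ℕ} :
    i ∈ addable n S ↔ 1 ≤ i ∧ i + 1 ≤ n ∧ i ∉ S ∧ i + 1 ∉ S ∧ ∀ k ∈ S, k + 1 ≠ i := by
  simp only [addable, mem_filter, mem_Icc, mem_uncovered]
  constructor
  · rintro ⟨-, ⟨h1, -, hi, hk⟩, -, hn, hi1, -⟩
    exact ⟨h1, hn, hi, hi1, hk⟩
  · rintro ⟨h1, hn, hi, hi1, hk⟩
    refine ⟨⟨h1, by omega⟩, ⟨h1, by omega, hi, hk⟩, by omega, hn, hi1, fun k hk h => ?_⟩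
    exact hi (Nat.succ_injective h ▸ hk)

theorem uncovered_insert (n i : ℕ) (S : Finset ℕ) :
    uncovered n (insert i S) = ((uncovered n S).erase i).erase (i + 1) := by
  ext j
  simp only [mem_uncovered, mem_erase, mem_insert, forall_eq_or_imp]
  grind

theorem mem_sparseSets {n : ℕ} {S : Finset ℕ} :
    S ∈ sparseSets n ↔ S ⊆ Icc 1 (n - 1) ∧ ∀ i ∈ S, i + 1 ∉ S := by
  simp [sparseSets]

theorem mem_sparseSets_of_subset {n : ℕ} {S T : Finset ℕ} (hS : S ∈ sparseSets n) (hT : T ⊆ S) :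
    T ∈ sparseSets n := by
  rw [mem_sparseSets] at hS ⊢
  exact ⟨hT.trans hS.1, fun i hi hi1 => hS.2 i (hT hi) (hT hi1)⟩

theorem insert_mem_sparseSets {n i : ℕ} {S : Finset ℕ} (hS : S ∈ sparseSets n)
    (hi : i ∈ addable n S) : insert i S ∈ sparseSets n := by
  obtain ⟨h1, hn, -, hi1, hk⟩ := mem_addable.1 hi
  rw [mem_sparseSets] at hS ⊢
  refine ⟨insert_subset (mem_Icc.2 ⟨h1, by omega⟩) hS.1, ?_⟩
  simp only [mem_insert, forall_eq_or_imp, not_or]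
  exact ⟨⟨by omega, hi1⟩, fun k hk' => ⟨hk k hk', hS.2 k hk'⟩⟩

theorem mem_addable_erase {n i : ℕ} {T : Finset ℕ} (hT : T ∈ sparseSets n) (hi : i ∈ T) :
    i ∈ addable n (T.erase i) := by
  rw [mem_sparseSets] at hT
  have hiI := mem_Icc.1 (hT.1 hi)
  refine mem_addable.2 ⟨hiI.1, by omega, notMem_erase i T,
    fun h => hT.2 i hi (mem_of_mem_erase h), fun k hk hki => ?_⟩
  exact hT.2 k (mem_of_mem_erase hk) (hki ▸ hi)

theorem two_mul_card_le_of_mem_sparseSets {n : ℕ} {S : Finset ℕ} (hS : S ∈ sparseSets n) :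
    2 * S.card ≤ n := by
  rw [mem_sparseSets] at hS
  have hdisj : Disjoint S (S.image (· + 1)) := by
    simp only [disjoint_left, mem_image, not_exists, not_and]
    exact fun i hi j hj hji => hS.2 j hj (hji ▸ hi)
  have hsub : S ∪ S.image (· + 1) ⊆ Icc 1 n := by
    intro j hj
    rcases mem_union.1 hj with hj | hj
    · have := mem_Icc.1 (hS.1 hj); exact mem_Icc.2 ⟨this.1, by omega⟩
    · obtain ⟨k, hk, rfl⟩ := mem_image.1 hj
      have := mem_Icc.1 (hS.1 hk); exact mem_Icc.2 ⟨by omega, by omega⟩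
  have := card_le_card hsub
  rw [card_union_of_disjoint hdisj, card_image_of_injective _ Nat.succ_injective,
    Nat.card_Icc] at this
  omega

theorem sum_sum_addable_insert {M : Type*} [AddCommMonoid M] (n ℓ : ℕ) (f : Finset ℕ → M) :
    ∑ S ∈ (sparseSets n).filter (·.card = ℓ), ∑ i ∈ addable n S, f (insert i S) =
      (ℓ + 1) • ∑ T ∈ (sparseSets n).filter (·.card = ℓ + 1), f T := by
  calc _ = ∑ T ∈ (sparseSets n).filter (·.card = ℓ + 1), ∑ _i ∈ T, f T := by
        rw [sum_sigma', sum_sigma']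
        refine sum_bij' (fun p _ => ⟨insert p.2 p.1, p.2⟩) (fun p _ => ⟨p.1.erase p.2, p.2⟩)
          ?_ ?_ ?_ ?_ fun _ _ => rfl
        · rintro ⟨S, i⟩ h
          simp only [mem_sigma, mem_filter] at h ⊢
          have hiS := (mem_addable.1 h.2).2.2.1
          exact ⟨⟨insert_mem_sparseSets h.1.1 h.2, by rw [card_insert_of_notMem hiS, h.1.2]⟩,
            mem_insert_self i S⟩
        · rintro ⟨T, i⟩ h
          simp only [mem_sigma, mem_filter] at h ⊢
          exact ⟨⟨mem_sparseSets_of_subset h.1.1 (erase_subset i T),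
            by rw [card_erase_of_mem h.2, h.1.2]; rfl⟩, mem_addable_erase h.1.1 h.2⟩
        · rintro ⟨S, i⟩ h
          simp only [mem_sigma] at h
          simp [erase_insert (mem_addable.1 h.2).2.2.1]
        · rintro ⟨T, i⟩ h
          simp only [mem_sigma] at h
          simp [insert_erase h.2]
    _ = _ := by
        rw [smul_sum]
        refine sum_congr rfl fun T hT => ?_
        rw [sum_const, (mem_filter.1 hT).2]

section

variable {R : Type*} [CommRing R]

theorem deltaOp_prod_X (A : Finset (ℕ ⊕ ℕ)) (i : ℕ) :
    deltaOp i (∏ v ∈ A, X v : MvPolynomial (ℕ ⊕ ℕ) R) =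
      if Sum.inl i ∈ A ∧ Sum.inl (i + 1) ∈ A then
        X (Sum.inr i) * ∏ v ∈ (A.erase (Sum.inl i)).erase (Sum.inl (i + 1)), X v
      else 0 := by
  rw [deltaOp, pderiv_prod_X]
  by_cases hi : Sum.inl i ∈ A
  · simp [hi, pderiv_prod_X, mem_erase]
  · simp [hi]

noncomputable def sparseMonomial (R : Type*) [CommRing R] (n : ℕ) (S : Finset ℕ) :
    MvPolynomial (ℕ ⊕ ℕ) R :=
  ∏ v ∈ (uncovered n S).disjSum S, X v

theorem sparseMonomial_empty (n : ℕ) : sparseMonomial R n ∅ = Pmono R n := by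
  simp [sparseMonomial, uncovered, Pmono]

theorem deltaOp_sparseMonomial (n i : ℕ) (S : Finset ℕ) :
    deltaOp i (sparseMonomial R n S) =
      if i ∈ uncovered n S ∧ i + 1 ∈ uncovered n S then sparseMonomial R n (insert i S) else 0 := by
  rw [sparseMonomial, deltaOp_prod_X]
  simp only [inl_mem_disjSum]
  split_ifs with h
  · have hiS : i ∉ S := (mem_uncovered.1 h.1).2.2.1
    have herase : (((uncovered n S).disjSum S).erase (Sum.inl i)).erase (Sum.inl (i + 1)) =
        (((uncovered n S).erase i).erase (i + 1)).disjSum S := by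
      ext (j | j) <;> simp [and_assoc, and_comm]
    rw [herase, sparseMonomial, uncovered_insert, prod_disjSum, prod_disjSum, prod_insert hiS]
    ring
  · rfl

theorem dOp_sparseMonomial (n : ℕ) (S : Finset ℕ) :
    dOp R n (sparseMonomial R n S) = ∑ i ∈ addable n S, sparseMonomial R n (insert i S) := by
  simp only [dOp, deltaOp_sparseMonomial, addable, sum_filter]

noncomputable def dLinear (R : Type*) [CommRing R] (n : ℕ) :
    MvPolynomial (ℕ ⊕ ℕ) R →ₗ[R] MvPolynomial (ℕ ⊕ ℕ) R :=
  ∑ i ∈ Icc 1 (n - 1), LinearMap.mulLeft R (X (Sum.inr i)) ∘ₗ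
    (pderiv (Sum.inl (i + 1))).toLinearMap ∘ₗ (pderiv (Sum.inl i)).toLinearMap

theorem coe_dLinear (n : ℕ) : ⇑(dLinear R n) = dOp R n := by
  funext p
  simp [dLinear, dOp, deltaOp]

theorem iterate_dOp_Pmono (n ℓ : ℕ) :
    (dOp R n)^[ℓ] (Pmono R n) =
      ℓ.factorial • ∑ S ∈ (sparseSets n).filter (·.card = ℓ), sparseMonomial R n S := by
  induction ℓ with
  | zero =>
    have hzero : (sparseSets n).filter (·.card = 0) = {∅} := by
      ext S
      simp only [mem_filter, card_eq_zero, mem_singleton, and_iff_right_iff_imp]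
      rintro rfl
      simp [mem_sparseSets]
    rw [Function.iterate_zero_apply, hzero, sum_singleton, sparseMonomial_empty,
      Nat.factorial_zero, one_smul]
  | succ ℓ ih =>
    rw [Function.iterate_succ_apply', ih, ← coe_dLinear, map_nsmul, map_sum, coe_dLinear]
    simp only [dOp_sparseMonomial]
    rw [sum_sum_addable_insert, smul_smul, Nat.factorial_succ, mul_comm]

theorem foldr_deltaOp_Pmono {n : ℕ} {L : List ℕ} (hL : L.Pairwise (· < ·))
    (hS : L.toFinset ∈ sparseSets n) :
    L.foldr (fun i q => deltaOp i q) (Pmono R n) = sparseMonomial R n L.toFinset := by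
  induction L with
  | nil => simp [sparseMonomial_empty]
  | cons i L ih =>
    rw [List.pairwise_cons] at hL
    rw [List.toFinset_cons] at hS ⊢
    have hi : i ∈ addable n L.toFinset := by
      have hiI := mem_Icc.1 ((mem_sparseSets.1 hS).1 (mem_insert_self i _))
      refine mem_addable.2 ⟨hiI.1, by omega, fun h => ?_, fun h => ?_, fun k hk hki => ?_⟩
      · exact lt_irrefl i (hL.1 i (List.mem_toFinset.1 h))
      · exact (mem_sparseSets.1 hS).2 i (mem_insert_self i _) (mem_insert_of_mem h)
      · have := hL.1 k (List.mem_toFinset.1 hk)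
        omega
    rw [List.foldr_cons, ih hL.2 (mem_sparseSets_of_subset hS (subset_insert _ _)),
      deltaOp_sparseMonomial, if_pos (mem_filter.1 hi).2]

end

theorem exp_d_eq_sum_sparse_general (n : ℕ) :
    (∀ (R : Type*) [CommRing R], ∀ ℓ : ℕ, n / 2 < ℓ → (dOp R n)^[ℓ] (Pmono R n) = 0) ∧
    (∀ (R : Type*) [CommRing R] [Algebra ℚ R],
      ∑ ℓ ∈ Finset.range (n / 2 + 1), ((ℓ.factorial : ℚ)⁻¹) • (dOp R n)^[ℓ] (Pmono R n) =
        ∑ S ∈ sparseSets n, (S.sort (· ≤ ·)).foldr (fun i q => deltaOp i q) (Pmono R n)) := by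
  have hcard {S : Finset ℕ} (hS : S ∈ sparseSets n) : S.card ≤ n / 2 := by
    have := two_mul_card_le_of_mem_sparseSets hS
    omega
  refine ⟨fun R _ ℓ hℓ => ?_, fun R _ _ => ?_⟩
  · rw [iterate_dOp_Pmono, filter_eq_empty_iff.2 fun S hS h => by have := hcard hS; omega,
      sum_empty, smul_zero]
  · have hterm (ℓ : ℕ) : ((ℓ.factorial : ℚ)⁻¹) • (dOp R n)^[ℓ] (Pmono R n) =
        ∑ S ∈ (sparseSets n).filter (·.card = ℓ), sparseMonomial R n S := by
      rw [iterate_dOp_Pmono, ← Nat.cast_smul_eq_nsmul ℚ, smul_smul,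
        inv_mul_cancel₀ (by exact_mod_cast ℓ.factorial_ne_zero), one_smul]
    simp only [hterm]
    rw [sum_fiberwise_of_maps_to fun S hS => mem_range.2 (Nat.lt_succ_of_le (hcard hS))]
    refine sum_congr rfl fun S hS => ?_
    rw [foldr_deltaOp_Pmono (S.sortedLT_sort).pairwise (by rwa [sort_toFinset]), sort_toFinset]

/-- Let `n ≥ 1` and `d = δ_1 + ⋯ + δ_{n-1}`.  Then
(i) `d^ℓ (P_n) = 0` for every `ℓ > ⌊n/2⌋`; and
(ii) if `R` is a commutative `ℚ`-algebra, then
`∑_{ℓ=0}^{⌊n/2⌋} (1/ℓ!) d^ℓ (P_n) = ∑_{S sparse ⊆ {1,…,n-1}} δ_S (P_n)`,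
where `δ_S` is the composition of the `δ_i` over `i ∈ S` taken in increasing order of `i`. -/
theorem exp_d_eq_sum_sparse (n : ℕ) (hn : 1 ≤ n) :
    (∀ (R : Type*) [CommRing R], ∀ ℓ : ℕ, n / 2 < ℓ → (dOp R n)^[ℓ] (Pmono R n) = 0) ∧
    (∀ (R : Type*) [CommRing R] [Algebra ℚ R],
      ∑ ℓ ∈ Finset.range (n / 2 + 1), ((ℓ.factorial : ℚ)⁻¹) • (dOp R n)^[ℓ] (Pmono R n) =
        ∑ S ∈ sparseSets n, (S.sort (· ≤ ·)).foldr (fun i q => deltaOp i q) (Pmono R n)) :=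
  exp_d_eq_sum_sparse_general n
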